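/- For matrices A ∈ ℝ^{h×H} and B ∈ ℝ^{w×W}, define the rank-1 feature maps W_{s,t} = α_s^T β_t where α_s is the s-th row of A and β_t is the t-th row of B. Then the sum over all (s,t) of the anisotropic total variation norms satisfies: ∑_{s=1}^{h} ∑_{t=1}^{w} ‖W_{s,t}‖_TV = ‖∇_x B‖_1 · ‖A‖_1 + ‖B‖_1 · ‖∇_x A‖_1, where ∇_x computes the horizontal (column-difference) gradient of a matrix and ‖·‖_1 is the elementwise 1-norm. -/

import Mathlib

/-- Anisotropic total variation norm of a matrix in `ℝ^{(H+1)×(W+1)}`. -/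
noncomputable def tvNorm {H W : ℕ} (M : Matrix (Fin (H+1)) (Fin (W+1)) ℝ) : ℝ :=
  (∑ i : Fin H, ∑ j : Fin (W+1), |M i.succ j - M i.castSucc j|) +
  (∑ i : Fin (H+1), ∑ j : Fin W, |M i j.succ - M i j.castSucc|)

/-- Elementwise 1-norm of a matrix. -/
noncomputable def l1Norm {m n : ℕ} (M : Matrix (Fin m) (Fin n) ℝ) : ℝ :=
  ∑ i, ∑ j, |M i j|

/-- Elementwise 1-norm of the horizontal (column-difference) gradient `∇ₓ M`
(the last, zero, column of `∇ₓ M` contributes nothing). -/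
noncomputable def gradXNorm {m n : ℕ} (M : Matrix (Fin m) (Fin (n+1)) ℝ) : ℝ :=
  ∑ i, ∑ j : Fin n, |M i j.succ - M i j.castSucc|

/-!
The differences of a rank-one map factor, `a i' * b j - a i * b j = (a i' - a i) * b j`, so
the total variation of `(a i * b j)` is `‖Δa‖₁ ‖b‖₁ + ‖a‖₁ ‖Δb‖₁`. Summing this over the rows
`a = αₛ`, `b = βₜ` splits each term into a product of a sum over `s` and a sum over `t`.
-/

open Finset

theorem tvNorm_of_mul {H W : ℕ} (a : Fin (H+1) → ℝ) (b : Fin (W+1) → ℝ) :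
    tvNorm (Matrix.of fun i j => a i * b j)
      = (∑ i : Fin H, |a i.succ - a i.castSucc|) * ∑ j, |b j|
        + (∑ i, |a i|) * ∑ j : Fin W, |b j.succ - b j.castSucc| := by
  simp only [tvNorm, Matrix.of_apply, ← sub_mul, ← mul_sub, abs_mul, ← sum_mul, ← mul_sum]

/-- Lemma 1: the sum of the anisotropic TV norms of the rank-1 feature maps
`W_{s,t} = αₛᵀβₜ` equals `‖∇ₓB‖₁‖A‖₁ + ‖B‖₁‖∇ₓA‖₁`. -/
theorem tv_feature_maps_fused_lasso {h w H W : ℕ}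
    (A : Matrix (Fin h) (Fin (H+1)) ℝ) (B : Matrix (Fin w) (Fin (W+1)) ℝ) :
    ∑ s : Fin h, ∑ t : Fin w, tvNorm (Matrix.of fun i j => A s i * B t j)
      = gradXNorm B * l1Norm A + l1Norm B * gradXNorm A := by
  simp only [tvNorm_of_mul, sum_add_distrib, ← sum_mul, ← mul_sum, gradXNorm, l1Norm]
  ring
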